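/- For any numerical semigroup Λ different from ℕ with conductor c and genus g, setting k = 2c - g - 2, the ν sequence satisfies ν_k = ν_{k+1} (in fact both equal k - g + 2). -/

import Mathlib

structure NumericalSemigroup where
  carrier : Set ℕ
  zero_mem : 0 ∈ carrier
  add_mem : ∀ {a b : ℕ}, a ∈ carrier → b ∈ carrier → a + b ∈ carrier
  finite_compl : Set.Finite carrierᶜ

namespace NumericalSemigroup

/-- The genus: the number of gaps. -/
noncomputable def genus (Λ : NumericalSemigroup) : ℕ := Λ.carrierᶜ.ncard

/-- The conductor: the smallest `c` with `c + ℕ ⊆ Λ`. -/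
noncomputable def conductor (Λ : NumericalSemigroup) : ℕ := sInf {c : ℕ | ∀ n, c ≤ n → n ∈ Λ.carrier}

/-- `f` is the (unique) increasing enumeration of `Λ`. -/
noncomputable def IsEnum (Λ : NumericalSemigroup) (f : ℕ → ℕ) : Prop :=
  StrictMono f ∧ Set.range f = Λ.carrier

/-- The Arf property: `λ_i + λ_j - λ_k ∈ Λ` for all `i ≥ j ≥ k`. -/
noncomputable def IsArf (Λ : NumericalSemigroup) : Prop :=
  ∀ f : ℕ → ℕ, Λ.IsEnum f → ∀ i j k : ℕ, k ≤ j → j ≤ i → f i + f j - f k ∈ Λ.carrier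

end NumericalSemigroup

/-- `ν_i = #{j : λ_i - λ_j ∈ Λ}`, for `f` the enumeration of `Λ`. -/
noncomputable def NumericalSemigroup.nu (Λ : NumericalSemigroup) (f : ℕ → ℕ) (i : ℕ) : ℕ :=
  {j : ℕ | j ≤ i ∧ f i - f j ∈ Λ.carrier}.ncard

/-!
Write `λ` for the enumeration of `Λ`. The indices `j ≤ i` with `λ_i - λ_j ∉ Λ` correspond, via
`j ↦ λ_i - λ_j`, to the gaps `ℓ` with `λ_i - ℓ ∈ Λ`, so `ν_i + #{such gaps} = i + 1`.
Since `λ_{n-g} = n` for `n ≥ c`, the index `k = 2c - g - 2` has `λ_k = 2c - 2` and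
`λ_{k+1} = 2c - 1`. Every gap `ℓ < c` has `2c - 1 - ℓ ≥ c`, and `2c - 2 - ℓ ≥ c` unless
`ℓ = c - 1`, when `2c - 2 - ℓ = c - 1` is a gap. Hence `ν_k = k + 2 - g = ν_{k+1}`.
-/

namespace NumericalSemigroup

variable (Λ : NumericalSemigroup)

def gapSummands (n : ℕ) : Set ℕ :=
  {ℓ | ℓ ∉ Λ.carrier ∧ ∃ s ∈ Λ.carrier, ℓ + s = n}

lemma mem_of_conductor_le {n : ℕ} (hn : Λ.conductor ≤ n) : n ∈ Λ.carrier := by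
  have hne : {c : ℕ | ∀ n, c ≤ n → n ∈ Λ.carrier}.Nonempty := by
    obtain ⟨N, hN⟩ := Λ.finite_compl.bddAbove
    exact ⟨N + 1, fun n hn => by_contra fun h => absurd (hN h) (by omega)⟩
  exact Nat.sInf_mem hne n hn

lemma lt_conductor_of_not_mem {n : ℕ} (hn : n ∉ Λ.carrier) : n < Λ.conductor :=
  lt_of_not_ge (mt Λ.mem_of_conductor_le hn)

lemma conductor_sub_one_not_mem (hΛ : Λ.carrier ≠ Set.univ) :
    Λ.conductor - 1 ∉ Λ.carrier := by
  obtain ⟨x, hx⟩ := (Set.ne_univ_iff_exists_notMem _).mp hΛ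
  have hxc := Λ.lt_conductor_of_not_mem hx
  have hnot : Λ.conductor - 1 ∉ {c : ℕ | ∀ n, c ≤ n → n ∈ Λ.carrier} :=
    Nat.notMem_of_lt_sInf (show Λ.conductor - 1 < Λ.conductor by omega)
  simp only [Set.mem_ofPred_eq, not_forall] at hnot
  obtain ⟨n, hn, hnΛ⟩ := hnot
  obtain rfl : n = Λ.conductor - 1 := by have := Λ.lt_conductor_of_not_mem hnΛ; omega
  exact hnΛ

lemma one_lt_conductor (hΛ : Λ.carrier ≠ Set.univ) : 1 < Λ.conductor := by
  have h := Λ.conductor_sub_one_not_mem hΛ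
  have : Λ.conductor - 1 ≠ 0 := fun h0 => h (h0 ▸ Λ.zero_mem)
  omega

lemma gapSummands_eq_compl {n : ℕ} (hn : 2 * Λ.conductor ≤ n + 1) :
    Λ.gapSummands n = Λ.carrierᶜ := by
  refine Set.Subset.antisymm (fun ℓ hℓ => hℓ.1) fun ℓ hℓ => ?_
  have := Λ.lt_conductor_of_not_mem hℓ
  exact ⟨hℓ, n - ℓ, Λ.mem_of_conductor_le (by omega), by omega⟩

lemma gapSummands_two_mul_conductor_sub_two :
    Λ.gapSummands (2 * Λ.conductor - 2) = Λ.carrierᶜ \ {Λ.conductor - 1} := by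
  ext ℓ
  constructor
  · rintro ⟨hℓ, s, hs, hsum⟩
    refine ⟨hℓ, fun hℓc => ?_⟩
    obtain rfl : ℓ = Λ.conductor - 1 := hℓc
    obtain rfl | h0 : s = Λ.conductor - 1 ∨ Λ.conductor - 1 = 0 := by omega
    exacts [hℓ hs, hℓ (h0 ▸ Λ.zero_mem)]
  · rintro ⟨hℓ, hℓc⟩
    have := Λ.lt_conductor_of_not_mem hℓ
    have : ℓ ≠ Λ.conductor - 1 := hℓc
    exact ⟨hℓ, 2 * Λ.conductor - 2 - ℓ, Λ.mem_of_conductor_le (by omega), by omega⟩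

variable {Λ} {f : ℕ → ℕ}

lemma IsEnum.apply_mem (hf : Λ.IsEnum f) (i : ℕ) : f i ∈ Λ.carrier :=
  hf.2 ▸ Set.mem_range_self i

lemma IsEnum.image_Iic (hf : Λ.IsEnum f) (i : ℕ) :
    f '' Set.Iic i = Set.Iic (f i) ∩ Λ.carrier := by
  ext s
  constructor
  · rintro ⟨j, hj, rfl⟩
    exact ⟨hf.1.monotone hj, hf.apply_mem j⟩
  · rintro ⟨hs, hsΛ⟩
    obtain ⟨j, rfl⟩ := hf.2.symm ▸ hsΛ
    exact ⟨j, hf.1.le_iff_le.mp hs, rfl⟩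

lemma IsEnum.apply_eq_add_genus (hf : Λ.IsEnum f) {i : ℕ} (hi : Λ.conductor ≤ f i) :
    f i = i + Λ.genus := by
  have hgaps : Set.Iic (f i) \ Λ.carrier = Λ.carrierᶜ :=
    Set.sdiff_eq_compl_inter.trans <| Set.inter_eq_left.mpr fun x hx =>
      Set.mem_Iic.mpr (by have := Λ.lt_conductor_of_not_mem hx; omega)
  have hsplit := Set.ncard_inter_add_ncard_sdiff_eq_ncard (Set.Iic (f i)) Λ.carrier
  rw [← hf.image_Iic, hf.1.injective.injOn.ncard_image, hgaps, Set.ncard_Iic_nat,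
    Set.ncard_Iic_nat] at hsplit
  rw [genus]
  omega

lemma IsEnum.nu_add_ncard_gapSummands (hf : Λ.IsEnum f) (i : ℕ) :
    Λ.nu f i + (Λ.gapSummands (f i)).ncard = i + 1 := by
  have hbad : (Set.Iic i \ {j | f i - f j ∈ Λ.carrier}).ncard = (Λ.gapSummands (f i)).ncard := by
    refine Set.ncard_congr (fun j _ => f i - f j) ?_ ?_ ?_
    · rintro j ⟨hj, hjΛ⟩
      have := hf.1.monotone hj
      exact ⟨hjΛ, f j, hf.apply_mem j, by omega⟩
    · rintro j₁ j₂ ⟨hj₁, -⟩ ⟨hj₂, -⟩ h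
      have := hf.1.monotone hj₁
      have := hf.1.monotone hj₂
      exact hf.1.injective (by omega)
    · rintro ℓ ⟨hℓ, s, hs, hsum⟩
      obtain ⟨j, rfl⟩ := hf.2.symm ▸ hs
      have hj : j ≤ i := hf.1.le_iff_le.mp (by omega)
      have hℓj : f i - f j = ℓ := by omega
      exact ⟨j, ⟨hj, by simpa [hℓj] using hℓ⟩, hℓj⟩
  have hsplit := Set.ncard_inter_add_ncard_sdiff_eq_ncard (Set.Iic i) {j | f i - f j ∈ Λ.carrier}
  rwa [hbad, Set.ncard_Iic_nat] at hsplit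

end NumericalSemigroup

theorem stmt16 (Λ : NumericalSemigroup) (f : ℕ → ℕ) (hf : Λ.IsEnum f)
    (hnt : Λ.carrier ≠ Set.univ) :
    Λ.nu f (2 * Λ.conductor - Λ.genus - 2) = Λ.nu f (2 * Λ.conductor - Λ.genus - 2 + 1) ∧
    Λ.nu f (2 * Λ.conductor - Λ.genus - 2) + Λ.genus = (2 * Λ.conductor - Λ.genus - 2) + 2 := by
  set c := Λ.conductor
  set g := Λ.genus
  have hc := Λ.one_lt_conductor hnt
  obtain ⟨k, hk⟩ : 2 * c - 2 ∈ Set.range f := hf.2 ▸ Λ.mem_of_conductor_le (by omega)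
  have hkg := hf.apply_eq_add_genus (i := k) (by omega)
  have hk₁ : f (k + 1) = k + 1 + g :=
    hf.apply_eq_add_genus (by have := hf.1 (Nat.lt_add_one k); omega)
  have hνk := hf.nu_add_ncard_gapSummands k
  have hνk₁ := hf.nu_add_ncard_gapSummands (k + 1)
  rw [hk, Λ.gapSummands_two_mul_conductor_sub_two] at hνk
  rw [Λ.gapSummands_eq_compl (by omega)] at hνk₁
  have hgaps : _ + 1 = g :=
    Set.ncard_sdiff_singleton_add_one (Λ.conductor_sub_one_not_mem hnt) Λ.finite_compl
  change _ + g = _ at hνk₁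
  obtain rfl : 2 * c - g - 2 = k := by omega
  constructor <;> omega
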